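/- arXiv:2407.10455 — 3 statements merged into one kernel-verified Lean document; each statement's English description precedes it below -/
import Mathlib

section
/- If 𝒯 ⊆ L(X,F) is a collectively L-weakly compact set of operators from a Banach space X to a Banach lattice F, then the strong-operator closure of the absolute convex hull of 𝒯 is also collectively L-weakly compact. -/
set_option maxHeartbeats 1000000

open Filter Topology Metric Set

/-- A pairwise disjoint sequence in a Banach lattice. -/
def DisjSeq {E : Type*} [NormedAddCommGroup E] [Lattice E] [IsOrderedAddMonoid E] [HasSolidNorm E] (x : ℕ → E) : Prop :=
  ∀ n m, n ≠ m → |x n| ⊓ |x m| = 0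

/-- The solid hull of a set. -/
def solidHull {E : Type*} [NormedAddCommGroup E] [Lattice E] [IsOrderedAddMonoid E] [HasSolidNorm E] (A : Set E) : Set E :=
  {x | ∃ a ∈ A, |x| ≤ |a|}

/-- A set is L-weakly compact if it is norm bounded and every disjoint
sequence in its solid hull is norm null. -/
def IsLwcSet {E : Type*} [NormedAddCommGroup E] [Lattice E] [IsOrderedAddMonoid E] [HasSolidNorm E] (A : Set E) : Prop :=
  Bornology.IsBounded A ∧
    ∀ x : ℕ → E, (∀ n, x n ∈ solidHull A) → DisjSeq x →
      Tendsto (fun n => ‖x n‖) atTop (𝓝 0)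

/-- The absolute convex hull of a set. -/
def absco {V : Type*} [AddCommGroup V] [Module ℝ V] (A : Set V) : Set V :=
  {x | ∃ (m : ℕ) (α : Fin m → ℝ) (a : Fin m → V),
    (∑ k, |α k|) ≤ 1 ∧ (∀ k, a k ∈ A) ∧ x = ∑ k, α k • a k}

/-- The closure of a set of operators in the strong operator topology. -/
def StrongClosure {X F : Type*} [NormedAddCommGroup X] [NormedSpace ℝ X]
    [NormedAddCommGroup F] [NormedSpace ℝ F] (𝒜 : Set (X →L[ℝ] F)) : Set (X →L[ℝ] F) :=
  {S | ∀ (s : Finset X), ∀ ε > (0 : ℝ), ∃ A ∈ 𝒜, ∀ x ∈ s, ‖S x - A x‖ < ε}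


set_option linter.unusedSectionVars false
set_option linter.unusedVariables false

section Toolkit
variable {F : Type*} [NormedAddCommGroup F] [Lattice F] [IsOrderedAddMonoid F] [HasSolidNorm F] [NormedSpace ℝ F]

omit [NormedSpace ℝ F] in
lemma half_nonneg_of (y : F) (h : 0 ≤ y + y) : 0 ≤ y := by
  have hneg : -y ≤ y := by
    have := add_le_add_right h (-y)
    simpa [add_assoc] using this
  have h1 : y⁻ ≤ y⁺ := sup_le (le_sup_of_le_left hneg) le_sup_right
  have h2 := posPart_inf_negPart_eq_zero y
  have h3 : y⁻ = 0 := by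
    rw [← inf_eq_left.2 h1, inf_comm, h2]
  have h4 := posPart_sub_negPart y
  rw [h3, sub_zero] at h4
  rw [← h4]
  exact posPart_nonneg y

lemma smul_nonneg_real {x : F} (hx : 0 ≤ x) {r : ℝ} (hr : 0 ≤ r) : 0 ≤ r • x := by
  -- dyadic approximation
  have key : ∀ k : ℕ, 0 ≤ ((2:ℝ)^k)⁻¹ • x := by
    intro k
    induction k with
    | zero => simpa using hx
    | succ k ih =>
      apply half_nonneg_of
      have : ((2:ℝ)^(k+1))⁻¹ • x + ((2:ℝ)^(k+1))⁻¹ • x = ((2:ℝ)^k)⁻¹ • x := by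
        rw [← add_smul]; congr 1; ring
      rw [this]; exact ih
  have dy : ∀ (n k : ℕ), 0 ≤ ((n : ℝ) / 2^k) • x := by
    intro n k
    have : ((n : ℝ) / 2^k) • x = n • (((2:ℝ)^k)⁻¹ • x) := by
      rw [div_eq_mul_inv, mul_smul, Nat.cast_smul_eq_nsmul]
    rw [this]
    exact nsmul_nonneg (key k) n
  -- r = lim of dyadics
  have tend : Tendsto (fun k : ℕ => ((⌊r * 2^k⌋₊ : ℝ) / 2^k) • x) atTop (𝓝 (r • x)) := by
    apply Tendsto.smul_const
    have hb : ∀ k : ℕ, |((⌊r * 2^k⌋₊ : ℝ) / 2^k) - r| ≤ (2:ℝ)⁻¹ ^ k := by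
      intro k
      have hpos : (0:ℝ) < 2^k := by positivity
      have h1 : (⌊r * 2^k⌋₊ : ℝ) ≤ r * 2^k := Nat.floor_le (by positivity)
      have h2 : r * 2^k < (⌊r * 2^k⌋₊ : ℝ) + 1 := Nat.lt_floor_add_one _
      rw [abs_le]
      constructor
      · rw [neg_le, inv_pow]
        have hr2 : r ≤ ((⌊r * 2^k⌋₊ : ℝ) + 1) / 2^k := by
          rw [le_div_iff₀ hpos]; linarith
        have hq : ((⌊r * 2^k⌋₊ : ℝ) + 1) / 2^k - (⌊r * 2^k⌋₊ : ℝ) / 2^k = 1 / 2^k := by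
          ring
        have : r - (⌊r * 2^k⌋₊ : ℝ) / 2^k ≤ 1 / 2^k := by linarith
        calc -(((⌊r * 2^k⌋₊ : ℝ) / 2^k) - r) = r - (⌊r * 2^k⌋₊ : ℝ) / 2^k := by ring
          _ ≤ 1 / 2^k := this
          _ ≤ ((2:ℝ)^k)⁻¹ := by rw [one_div]
      · have : (⌊r * 2^k⌋₊ : ℝ) / 2^k ≤ r := by
          rw [div_le_iff₀ hpos]; exact h1
        have := sub_nonpos.2 this
        calc ((⌊r * 2^k⌋₊ : ℝ) / 2^k) - r ≤ 0 := this
          _ ≤ (2:ℝ)⁻¹ ^ k := by positivity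
    have h0 : Tendsto (fun k : ℕ => (2:ℝ)⁻¹ ^ k) atTop (𝓝 0) :=
      tendsto_pow_atTop_nhds_zero_of_lt_one (by norm_num) (by norm_num)
    rw [← sub_zero r] at *
    have := squeeze_zero (fun k => abs_nonneg _) hb h0
    rw [tendsto_iff_norm_sub_tendsto_zero]
    simpa using this
  exact le_of_tendsto_of_tendsto tendsto_const_nhds tend
    (Filter.Eventually.of_forall fun k => dy _ _)


lemma smul_le_smul_real {r : ℝ} (hr : 0 ≤ r) {a b : F} (h : a ≤ b) : r • a ≤ r • b := by
  have := smul_nonneg_real (sub_nonneg.2 h) hr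
  rw [smul_sub, sub_nonneg] at this
  exact this

lemma smul_le_smul_scalar {c d : ℝ} (hc : c ≤ d) {a : F} (ha : 0 ≤ a) : c • a ≤ d • a := by
  have := smul_nonneg_real ha (sub_nonneg.2 hc)
  rw [sub_smul, sub_nonneg] at this
  exact this

lemma abs_smul_le_real (r : ℝ) (a : F) : |r • a| ≤ |r| • |a| := by
  have key : ∀ (s : ℝ) (c : F), s • c ≤ |s| • |c| := by
    intro s c
    rcases le_total 0 s with hs | hs
    · rw [abs_of_nonneg hs]
      exact smul_le_smul_real hs (le_abs_self c)
    · rw [abs_of_nonpos hs]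
      calc s • c = (-s) • (-c) := by rw [neg_smul_neg]
        _ ≤ (-s) • |c| := smul_le_smul_real (neg_nonneg.2 hs) (neg_le_abs c)
  refine abs_le'.2 ⟨key r a, ?_⟩
  have := key r (-a)
  rwa [smul_neg, abs_neg] at this

lemma inf_eq_zero_of_le_smul {a b p q : F} {c d : ℝ}
    (ha : 0 ≤ a) (hb : 0 ≤ b) (hab : a ⊓ b = 0) (hc : 0 ≤ c) (hd : 0 ≤ d)
    (hp : 0 ≤ p) (hq : 0 ≤ q)
    (hpa : p ≤ c • a) (hqb : q ≤ d • b) : p ⊓ q = 0 := by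
  set C := max c d with hC
  have hC0 : 0 ≤ C := le_max_of_le_left hc
  have hpa' : p ≤ C • a := hpa.trans (smul_le_smul_scalar (le_max_left c d) ha)
  have hqb' : q ≤ C • b := hqb.trans (smul_le_smul_scalar (le_max_right c d) hb)
  refine le_antisymm ?_ (le_inf hp hq)
  rcases eq_or_lt_of_le hC0 with hC1 | hC1
  · have : C • a = 0 := by rw [← hC1, zero_smul]
    exact (inf_le_left : p ⊓ q ≤ p).trans (hpa'.trans this.le)
  · have ht : p ⊓ q ≤ C • (a ⊓ b) := by
      have h1 : C⁻¹ • (p ⊓ q) ≤ a ⊓ b := by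
        refine le_inf ?_ ?_
        · have := smul_le_smul_real (inv_nonneg.2 hC0) ((inf_le_left : p ⊓ q ≤ p).trans hpa')
          rwa [smul_smul, inv_mul_cancel₀ hC1.ne', one_smul] at this
        · have := smul_le_smul_real (inv_nonneg.2 hC0) ((inf_le_right : p ⊓ q ≤ q).trans hqb')
          rwa [smul_smul, inv_mul_cancel₀ hC1.ne', one_smul] at this
      have := smul_le_smul_real hC0 h1
      rwa [smul_smul, mul_inv_cancel₀ hC1.ne', one_smul] at this
    rw [hab, smul_zero] at ht
    exact ht

lemma riesz_decomp : ∀ (m : ℕ) (u : Fin m → F), (∀ k, 0 ≤ u k) → ∀ w : F, 0 ≤ w →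
    w ≤ ∑ k, u k →
    ∃ v : Fin m → F, (∀ k, 0 ≤ v k) ∧ (∀ k, v k ≤ u k) ∧ w = ∑ k, v k := by
  intro m
  induction m with
  | zero =>
    intro u _ w hw0 hw
    refine ⟨0, fun k => le_rfl, fun k => k.elim0, ?_⟩
    simp only [Finset.univ_eq_empty, Finset.sum_empty] at hw ⊢
    exact le_antisymm hw hw0
  | succ m ih =>
    intro u hu w hw0 hw
    rw [Fin.sum_univ_succ] at hw
    set w1 := w ⊓ u 0 with hw1
    have hw1' : w - w1 = (w - u 0) ⊔ 0 := by
      rw [hw1, sub_inf, sub_self, sup_comm]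
    have h10 : 0 ≤ w1 := le_inf hw0 (hu 0)
    have h1u : w1 ≤ u 0 := inf_le_right
    have h20 : 0 ≤ w - w1 := by rw [hw1']; exact le_sup_right
    have h2s : w - w1 ≤ ∑ k : Fin m, u k.succ := by
      rw [hw1']
      exact sup_le (sub_le_iff_le_add'.2 hw)
        (Finset.sum_nonneg fun k _ => hu k.succ)
    obtain ⟨v, hv0, hvu, hvs⟩ := ih (fun k => u k.succ) (fun k => hu k.succ) _ h20 h2s
    refine ⟨Fin.cons w1 v, ?_, ?_, ?_⟩
    · intro k
      refine Fin.cases ?_ ?_ k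
      · simpa using h10
      · intro i; simpa using hv0 i
    · intro k
      refine Fin.cases ?_ ?_ k
      · simpa using h1u
      · intro i; simpa using hvu i
    · rw [Fin.sum_univ_succ, Fin.cons_zero]
      have : ∀ i : Fin m, (Fin.cons w1 v : Fin (m+1) → F) i.succ = v i :=
        fun i => @Fin.cons_succ m (fun _ => F) w1 v i
      rw [Finset.sum_congr rfl (fun i _ => this i)]
      rw [← hvs]
      abel
omit [NormedSpace ℝ F] in
lemma abs_sum_le_lat {ι : Type*} (s : Finset ι) (f : ι → F) :
    |∑ i ∈ s, f i| ≤ ∑ i ∈ s, |f i| := by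
  induction s using Finset.cons_induction with
  | empty => simp
  | cons a s ha ih =>
    rw [Finset.sum_cons, Finset.sum_cons]
    exact (abs_add_le _ _).trans (add_le_add_right ih _)

omit [NormedSpace ℝ F] in
lemma neg_abs_le_lat (y : F) : -|y| ≤ y := by
  rw [abs, neg_sup, neg_neg]
  exact inf_le_right

omit [NormedSpace ℝ F] in
lemma trunc_exists (y u v : F) (hu : 0 ≤ u) (hv : 0 ≤ v) (hyuv : |y| ≤ u + v) :
    ∃ z : F, |z| ≤ u ∧ |z| ≤ |y| ∧ |y - z| ≤ v := by
  refine ⟨(y ⊔ -u) ⊓ u, ?_, ?_, ?_⟩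
  · refine abs_le'.2 ⟨inf_le_right, ?_⟩
    rw [neg_le]
    exact le_inf le_sup_right (neg_le_self hu)
  · refine abs_le'.2 ⟨?_, ?_⟩
    · exact inf_le_left.trans (sup_le (le_abs_self y) ((neg_nonpos.2 hu).trans (abs_nonneg y)))
    · rw [neg_le]
      exact le_inf ((neg_abs_le_lat y).trans le_sup_left) ((neg_nonpos.2 (abs_nonneg y)).trans hu)
  · refine abs_le'.2 ⟨?_, ?_⟩
    · have h1 : y ⊓ u ≤ (y ⊔ -u) ⊓ u := inf_le_inf_right u le_sup_left
      have h2 : y - (y ⊔ -u) ⊓ u ≤ y - y ⊓ u := sub_le_sub_left h1 y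
      have h3 : y - y ⊓ u = (y - y) ⊔ (y - u) := sub_inf y u y
      have h4 : y - u ≤ v := sub_le_iff_le_add.2 (by
        have := (le_abs_self y).trans hyuv
        rwa [add_comm] at this)
      refine h2.trans ?_
      rw [h3, sub_self]
      exact sup_le hv h4
    · rw [neg_sub]
      have h1 : (y ⊔ -u) ⊓ u - y ≤ (y ⊔ -u) - y := sub_le_sub_right inf_le_left y
      have h3 : (y ⊔ -u) - y = (y - y) ⊔ (-u - y) := sup_sub y (-u) y
      have h6 : -y ≤ u + v := (neg_le_abs y).trans hyuv
      have h4 : -u - y ≤ v := by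
        rw [show -u - y = -y - u by abel, sub_le_iff_le_add, add_comm]
        exact h6
      refine h1.trans ?_
      rw [h3, sub_self]
      exact sup_le hv h4

end Toolkit

/-- The strong-operator closure of the absolute convex hull of a collectively
L-weakly compact set of operators is collectively L-weakly compact. -/

theorem strongClosure_absco_collectivelyLwc {X F : Type*}
    [NormedAddCommGroup X] [NormedSpace ℝ X] [CompleteSpace X]
    [NormedAddCommGroup F] [Lattice F] [IsOrderedAddMonoid F] [HasSolidNorm F] [NormedSpace ℝ F] [CompleteSpace F]
    (𝒯 : Set (X →L[ℝ] F))
    (h : IsLwcSet (⋃ T ∈ 𝒯, T '' closedBall (0 : X) 1)) :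
    IsLwcSet (⋃ T ∈ StrongClosure (absco 𝒯), T '' closedBall (0 : X) 1) := by
  obtain ⟨hbA, hdA⟩ := h
  obtain ⟨M0, hM0⟩ := isBounded_iff_forall_norm_le.1 hbA
  set M := max M0 0 with hM
  have hM0' : (0:ℝ) ≤ M := le_max_right _ _
  have hMA : ∀ a ∈ (⋃ T ∈ 𝒯, T '' closedBall (0 : X) 1), ‖a‖ ≤ M :=
    fun a ha => (hM0 a ha).trans (le_max_left _ _)
  have hmemA : ∀ (T : X →L[ℝ] F), T ∈ 𝒯 → ∀ x ∈ closedBall (0:X) 1,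
      T x ∈ (⋃ T ∈ 𝒯, T '' closedBall (0 : X) 1) := by
    intro T hT x hx
    exact mem_iUnion.2 ⟨T, mem_iUnion.2 ⟨hT, ⟨x, hx, rfl⟩⟩⟩
  -- norm bound for elements of absco applied to the ball
  have habsco : ∀ A' ∈ absco 𝒯, ∀ x ∈ closedBall (0:X) 1, ‖A' x‖ ≤ M := by
    rintro A' ⟨m, α, T, hα, hT, rfl⟩ x hx
    have h1 : (∑ k, α k • T k) x = ∑ k, α k • (T k x) := by
      simp [ContinuousLinearMap.sum_apply, ContinuousLinearMap.smul_apply]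
    rw [h1]
    calc ‖∑ k, α k • (T k x)‖ ≤ ∑ k, ‖α k • (T k x)‖ := norm_sum_le _ _
      _ = ∑ k, |α k| * ‖T k x‖ := by
          refine Finset.sum_congr rfl fun k _ => ?_
          rw [norm_smul, Real.norm_eq_abs]
      _ ≤ ∑ k, |α k| * M := Finset.sum_le_sum fun k _ =>
          mul_le_mul_of_nonneg_left (hMA _ (hmemA (T k) (hT k) x hx)) (abs_nonneg _)
      _ = (∑ k, |α k|) * M := by rw [← Finset.sum_mul]
      _ ≤ 1 * M := mul_le_mul_of_nonneg_right hα hM0'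
      _ = M := one_mul M
  constructor
  · rw [isBounded_iff_forall_norm_le]
    refine ⟨M + 1, ?_⟩
    intro b hb
    simp only [mem_iUnion] at hb
    obtain ⟨S, hS, x, hx, rfl⟩ := hb
    obtain ⟨A', hA'm, hcl⟩ := hS {x} 1 one_pos
    have happ := hcl x (Finset.mem_singleton_self x)
    calc ‖S x‖ = ‖(S x - A' x) + A' x‖ := by rw [sub_add_cancel]
      _ ≤ ‖S x - A' x‖ + ‖A' x‖ := norm_add_le _ _
      _ ≤ 1 + M := add_le_add happ.le (habsco A' hA'm x hx)
      _ = M + 1 := by ring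
  · intro y hy hdisj
    by_contra hcon
    rw [Metric.tendsto_atTop] at hcon
    push_neg at hcon
    obtain ⟨ε, hε, hfreq⟩ := hcon
    have hfreq' : ∃ᶠ n in atTop, ε ≤ ‖y n‖ := by
      rw [frequently_atTop]
      intro N
      obtain ⟨n, hn, hd⟩ := hfreq N
      refine ⟨n, hn, ?_⟩
      rwa [Real.dist_eq, sub_zero, abs_of_nonneg (norm_nonneg _)] at hd
    obtain ⟨φ, hφmono, hφ⟩ := extraction_of_frequently_atTop hfreq'
    -- main claim
    have claim : ∀ n : ℕ, ∃ (d : F) (c : ℝ), 0 ≤ c ∧ 0 ≤ d ∧ d ≤ c • |y (φ n)| ∧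
        d ∈ solidHull (⋃ T ∈ 𝒯, T '' closedBall (0 : X) 1) ∧ ε/2 < ‖d‖ := by
      intro n
      obtain ⟨b, hbB, hyb⟩ := hy (φ n)
      simp only [mem_iUnion] at hbB
      obtain ⟨S, hS, x, hx, rfl⟩ := hbB
      obtain ⟨A', hA'm, hcl⟩ := hS {x} (ε/2) (half_pos hε)
      have happ : ‖S x - A' x‖ < ε/2 := hcl x (Finset.mem_singleton_self x)
      have habs : |y (φ n)| ≤ |A' x| + |S x - A' x| := by
        refine hyb.trans ?_
        calc |S x| = |A' x + (S x - A' x)| := by rw [add_sub_cancel]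
          _ ≤ |A' x| + |S x - A' x| := abs_add_le _ _
      obtain ⟨z, hz1, hz2, hz3⟩ :=
        trunc_exists (y (φ n)) (|A' x|) (|S x - A' x|) (abs_nonneg _) (abs_nonneg _) habs
      have hzn : ε/2 < ‖z‖ := by
        have h1 : ‖y (φ n) - z‖ ≤ ‖S x - A' x‖ := by
          have := norm_le_norm_of_abs_le_abs (hz3.trans_eq (abs_abs (S x - A' x)).symm)
          rwa [norm_abs_eq_norm] at this
        have h2 : ‖y (φ n)‖ ≤ ‖y (φ n) - z‖ + ‖z‖ := by
          calc ‖y (φ n)‖ = ‖(y (φ n) - z) + z‖ := by rw [sub_add_cancel]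
            _ ≤ _ := norm_add_le _ _
        have h3 := hφ n
        linarith
      obtain ⟨m, α, T, hα, hT, rfl⟩ := hA'm
      have hu0 : ∀ k : Fin m, 0 ≤ |α k| • |T k x| :=
        fun k => smul_nonneg_real (abs_nonneg _) (abs_nonneg _)
      have hzu : |z| ≤ ∑ k, |α k| • |T k x| := by
        refine hz1.trans ?_
        have h1 : (∑ k, α k • T k) x = ∑ k, α k • (T k x) := by
          simp [ContinuousLinearMap.sum_apply, ContinuousLinearMap.smul_apply]
        rw [h1]
        calc |∑ k, α k • (T k x)| ≤ ∑ k, |α k • (T k x)| :=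
            abs_sum_le_lat _ _
          _ ≤ ∑ k, |α k| • |T k x| :=
            Finset.sum_le_sum fun k _ => abs_smul_le_real (α k) (T k x)
      obtain ⟨w, hw0, hwu, hwsum⟩ :=
        riesz_decomp m (fun k => |α k| • |T k x|) hu0 (|z|) (abs_nonneg z) hzu
      have hksel : ∃ k : Fin m, α k ≠ 0 ∧ ε/2 < ‖(|α k|)⁻¹ • w k‖ := by
        by_contra hno
        push_neg at hno
        have hbound : ∀ k : Fin m, ‖w k‖ ≤ |α k| * (ε/2) := by
          intro k
          by_cases hk : α k = 0
          · have hwk : w k = 0 := le_antisymm (by simpa [hk] using hwu k) (hw0 k)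
            rw [hwk, norm_zero]
            positivity
          · have h1 := hno k hk
            have h2 : ‖w k‖ = |α k| * ‖(|α k|)⁻¹ • w k‖ := by
              rw [norm_smul, Real.norm_eq_abs, abs_inv, abs_abs, ← mul_assoc,
                mul_inv_cancel₀ (abs_ne_zero.2 hk), one_mul]
            rw [h2]
            exact mul_le_mul_of_nonneg_left h1 (abs_nonneg _)
        have : ‖z‖ ≤ ε/2 := by
          calc ‖z‖ = ‖|z|‖ := (norm_abs_eq_norm z).symm
            _ = ‖∑ k, w k‖ := by rw [hwsum]
            _ ≤ ∑ k, ‖w k‖ := norm_sum_le _ _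
            _ ≤ ∑ k, |α k| * (ε/2) := Finset.sum_le_sum fun k _ => hbound k
            _ = (∑ k, |α k|) * (ε/2) := by rw [← Finset.sum_mul]
            _ ≤ 1 * (ε/2) := mul_le_mul_of_nonneg_right hα (by positivity)
            _ = ε/2 := one_mul _
        linarith
      obtain ⟨k, hk0, hkg⟩ := hksel
      have hak : (0:ℝ) ≤ (|α k|)⁻¹ := inv_nonneg.2 (abs_nonneg _)
      refine ⟨(|α k|)⁻¹ • w k, (|α k|)⁻¹, hak,
        smul_nonneg_real (hw0 k) hak, ?_, ?_, hkg⟩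
      · refine smul_le_smul_real hak ?_
        refine le_trans ?_ hz2
        rw [hwsum]
        exact Finset.single_le_sum (fun i _ => hw0 i) (Finset.mem_univ k)
      · refine ⟨T k x, hmemA (T k) (hT k) x hx, ?_⟩
        rw [abs_of_nonneg (smul_nonneg_real (hw0 k) hak)]
        have h1 := smul_le_smul_real hak (hwu k)
        rwa [smul_smul, inv_mul_cancel₀ (abs_ne_zero.2 hk0), one_smul] at h1
    choose d c hc hd0 hdc hdmem hdn using claim
    have hdd : DisjSeq d := by
      intro n m' hnm
      rw [abs_of_nonneg (hd0 n), abs_of_nonneg (hd0 m')]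
      exact inf_eq_zero_of_le_smul (abs_nonneg _) (abs_nonneg _)
        (hdisj (φ n) (φ m') (hφmono.injective.ne hnm)) (hc n) (hc m')
        (hd0 n) (hd0 m') (hdc n) (hdc m')
    have htend := hdA d hdmem hdd
    obtain ⟨n, hn⟩ := (htend.eventually_lt_const (by positivity : (0:ℝ) < ε/2)).exists
    exact absurd hn (not_lt.2 (hdn n).le)
end

section
/- Every totally bounded (with respect to the operator norm) set of L-weakly compact operators from a Banach space X to a Banach lattice F is collectively L-weakly compact. -/
open Filter Topology Metric Set

/-- Auxiliary: a disjoint sequence whose terms each lie in the solid hull of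
one of finitely many "L-weakly compact" sets is norm null. -/
lemma finite_union_lwc_aux {E : Type*} [NormedAddCommGroup E] [Lattice E] [IsOrderedAddMonoid E] [HasSolidNorm E]
    {ι : Type*} (t : Set ι) (ht : t.Finite) (A : ι → Set E)
    (h : ∀ i ∈ t, ∀ x : ℕ → E, (∀ n, x n ∈ solidHull (A i)) → DisjSeq x →
      Tendsto (fun n => ‖x n‖) atTop (𝓝 0))
    (y : ℕ → E) (hy : ∀ n, ∃ i ∈ t, y n ∈ solidHull (A i)) (hd : DisjSeq y) :
    Tendsto (fun n => ‖y n‖) atTop (𝓝 0) := by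
  choose f hf hmem using hy
  have key : ∀ ε > (0 : ℝ), ∀ᶠ n in atTop, ‖y n‖ < ε := by
    intro ε hε
    by_contra hcon
    have hfreq : ∃ᶠ n in atTop, ¬ ‖y n‖ < ε := (Filter.not_eventually).mp hcon
    have hinf : {n : ℕ | ¬ ‖y n‖ < ε}.Infinite :=
      Nat.frequently_atTop_iff_infinite.mp hfreq
    set s := {n : ℕ | ¬ ‖y n‖ < ε} with hs
    haveI : Infinite ↥s := hinf.to_subtype
    haveI : Finite ↥t := ht.to_subtype
    obtain ⟨i, hi⟩ := Finite.exists_infinite_fiber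
      (fun n : ↥s => (⟨f (n : ℕ), hf (n : ℕ)⟩ : ↥t))
    haveI := hi
    let e := Infinite.natEmbedding ((fun n : ↥s => (⟨f (n : ℕ), hf (n : ℕ)⟩ : ↥t)) ⁻¹' {i})
    set g : ℕ → ℕ := fun n => ((e n : ↥s) : ℕ) with hg
    have hginj : Function.Injective g := by
      intro a b hab
      exact e.injective (Subtype.ext (Subtype.ext hab))
    have hfi : ∀ n, f (g n) = (i : ι) := by
      intro n
      have := (e n).2
      simp only [Set.mem_preimage, Set.mem_singleton_iff] at this
      exact congrArg Subtype.val this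
    have hzmem : ∀ n, y (g n) ∈ solidHull (A (i : ι)) := by
      intro n
      have := hmem (g n)
      rwa [hfi n] at this
    have hzdisj : DisjSeq (fun n => y (g n)) := by
      intro n m hnm
      exact hd (g n) (g m) (fun hc => hnm (hginj hc))
    have htend := h (i : ι) i.2 (fun n => y (g n)) hzmem hzdisj
    have : ∀ᶠ n in atTop, ‖y (g n)‖ < ε := by
      have := Metric.tendsto_atTop.mp htend ε hε
      obtain ⟨N, hN⟩ := this
      refine Filter.eventually_atTop.mpr ⟨N, fun n hn => ?_⟩
      have := hN n hn
      rwa [Real.dist_eq, sub_zero, abs_of_nonneg (norm_nonneg _)] at this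
    obtain ⟨n, hn⟩ := this.exists
    exact (e n).1.2 hn
  rw [Metric.tendsto_atTop]
  intro ε hε
  obtain ⟨N, hN⟩ := Filter.eventually_atTop.mp (key ε hε)
  exact ⟨N, fun n hn => by
    rw [Real.dist_eq, sub_zero, abs_of_nonneg (norm_nonneg _)]; exact hN n hn⟩

/-- Every totally bounded (in operator norm) set of L-weakly compact operators
is collectively L-weakly compact. -/
theorem totallyBounded_collectivelyLwc {X F : Type*}
    [NormedAddCommGroup X] [NormedSpace ℝ X] [CompleteSpace X]
    [NormedAddCommGroup F] [Lattice F] [IsOrderedAddMonoid F] [HasSolidNorm F] [NormedSpace ℝ F] [CompleteSpace F]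
    (𝒯 : Set (X →L[ℝ] F)) (htb : TotallyBounded 𝒯)
    (hLwc : ∀ T ∈ 𝒯, IsLwcSet (T '' closedBall (0 : X) 1)) :
    IsLwcSet (⋃ T ∈ 𝒯, T '' closedBall (0 : X) 1) := by
  constructor
  · -- boundedness
    obtain ⟨C, hC⟩ := (htb.isBounded).subset_closedBall 0
    rw [Metric.isBounded_iff_subset_closedBall 0]
    refine ⟨C, ?_⟩
    rintro z hz
    simp only [Set.mem_iUnion] at hz
    obtain ⟨T, hT, u, hu, rfl⟩ := hz
    have hTnorm : ‖T‖ ≤ C := by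
      have := hC hT
      rwa [Metric.mem_closedBall, dist_zero_right] at this
    have hunorm : ‖u‖ ≤ 1 := by
      rwa [Metric.mem_closedBall, dist_zero_right] at hu
    rw [Metric.mem_closedBall, dist_zero_right]
    calc ‖T u‖ ≤ ‖T‖ * ‖u‖ := T.le_opNorm u
      _ ≤ C * 1 := by
          apply mul_le_mul hTnorm hunorm (norm_nonneg _) ((norm_nonneg T).trans hTnorm)
      _ = C := mul_one C
  · -- disjoint sequences in the solid hull are norm null
    intro x hx hd
    rw [Metric.tendsto_atTop]
    intro ε hε
    -- unpack the solid-hull membership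
    have hx' : ∀ n, ∃ T ∈ 𝒯, ∃ u ∈ closedBall (0 : X) 1, |x n| ≤ |T u| := by
      intro n
      obtain ⟨a, ha, hle⟩ := hx n
      simp only [Set.mem_iUnion] at ha
      obtain ⟨T, hT, u, hu, rfl⟩ := ha
      exact ⟨T, hT, u, hu, hle⟩
    choose T hT u hu hle using hx'
    -- an (ε/3)-net with centers in 𝒯
    have hent : {p : (X →L[ℝ] F) × (X →L[ℝ] F) | dist p.1 p.2 < ε / 3} ∈
        uniformity (X →L[ℝ] F) := dist_mem_uniformity (by linarith)
    obtain ⟨t, hts, htfin, hcov⟩ := totallyBounded_iff_subset.mp htb _ hent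
    -- for each n pick a center close to T n
    have hnet : ∀ n, ∃ S ∈ t, ‖T n - S‖ < ε / 3 := by
      intro n
      have := hcov (hT n)
      simp only [Set.mem_iUnion, Set.mem_setOf_eq] at this
      obtain ⟨S, hS, hdist⟩ := this
      exact ⟨S, hS, by rwa [dist_eq_norm] at hdist⟩
    choose S hSt hSnear using hnet
    -- the perturbation
    set w : ℕ → F := fun n => (T n - S n) (u n) with hw
    have hwnorm : ∀ n, ‖w n‖ ≤ ε / 3 := by
      intro n
      have hun : ‖u n‖ ≤ 1 := by
        have := hu n; rwa [Metric.mem_closedBall, dist_zero_right] at this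
      calc ‖w n‖ ≤ ‖T n - S n‖ * ‖u n‖ := (T n - S n).le_opNorm (u n)
        _ ≤ (ε / 3) * 1 := mul_le_mul (le_of_lt (hSnear n)) hun (norm_nonneg _)
            (by linarith)
        _ = ε / 3 := mul_one _
    -- the truncated sequence
    set y : ℕ → F := fun n => (|x n| - |w n|) ⊔ 0 with hy
    have hy_nonneg : ∀ n, 0 ≤ y n := fun n => le_sup_right
    have hy_abs : ∀ n, |y n| = y n := fun n => abs_of_nonneg (hy_nonneg n)
    have hy_le_x : ∀ n, y n ≤ |x n| := by
      intro n
      exact sup_le (sub_le_self _ (abs_nonneg _)) (abs_nonneg _)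
    have hx_le : ∀ n, |x n| ≤ y n + |w n| := by
      intro n
      exact sub_le_iff_le_add.mp (le_sup_left : |x n| - |w n| ≤ y n)
    have hy_le_S : ∀ n, y n ≤ |S n (u n)| := by
      intro n
      apply sup_le _ (abs_nonneg _)
      have h1 : |x n| ≤ |S n (u n)| + |w n| := by
        have : T n (u n) = S n (u n) + w n := by
          simp [hw, ContinuousLinearMap.sub_apply]
        calc |x n| ≤ |T n (u n)| := hle n
          _ = |S n (u n) + w n| := by rw [this]
          _ ≤ |S n (u n)| + |w n| := abs_add_le _ _
      exact sub_le_iff_le_add.mpr h1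
    have hy_mem : ∀ n, y n ∈ solidHull ((S n) '' closedBall (0 : X) 1) := by
      intro n
      refine ⟨S n (u n), Set.mem_image_of_mem _ (hu n), ?_⟩
      rw [hy_abs n]; exact hy_le_S n
    have hy_disj : DisjSeq y := by
      intro n m hnm
      apply le_antisymm _ (le_inf (abs_nonneg _) (abs_nonneg _))
      calc |y n| ⊓ |y m| ≤ |x n| ⊓ |x m| := by
            apply inf_le_inf
            · rw [hy_abs n]; exact hy_le_x n
            · rw [hy_abs m]; exact hy_le_x m
        _ = 0 := hd n m hnm
    -- apply the finite-union lemma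
    have hytend : Tendsto (fun n => ‖y n‖) atTop (𝓝 0) := by
      apply finite_union_lwc_aux t htfin (fun Q => Q '' closedBall (0 : X) 1)
        (fun Q hQ => (hLwc Q (hts hQ)).2) y (fun n => ⟨S n, hSt n, hy_mem n⟩)
        hy_disj
    obtain ⟨N, hN⟩ := Metric.tendsto_atTop.mp hytend (ε / 3) (by linarith)
    refine ⟨N, fun n hn => ?_⟩
    have hyn : ‖y n‖ < ε / 3 := by
      have := hN n hn
      rwa [Real.dist_eq, sub_zero, abs_of_nonneg (norm_nonneg _)] at this
    have hxn : ‖x n‖ ≤ ‖y n‖ + ε / 3 := by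
      have h1 : ‖x n‖ = ‖|x n|‖ := (norm_abs_eq_norm _).symm
      have h2 : ‖|x n|‖ ≤ ‖y n + |w n|‖ := by
        apply norm_le_norm_of_abs_le_abs
        rw [abs_abs]
        have h3 : 0 ≤ y n + |w n| := add_nonneg (hy_nonneg n) (abs_nonneg _)
        rw [abs_of_nonneg h3]
        exact hx_le n
      have h4 : ‖y n + |w n|‖ ≤ ‖y n‖ + ‖|w n|‖ := norm_add_le _ _
      have h5 : ‖|w n|‖ = ‖w n‖ := norm_abs_eq_norm _
      have h6 := hwnorm n
      linarith
    rw [Real.dist_eq, sub_zero, abs_of_nonneg (norm_nonneg _)]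
    linarith
end

section
/- Let E, F be Banach lattices, 𝒮 a set of positive operators E → F, and 𝒯 a collectively M-weakly compact set of positive operators dominating 𝒮 (for each S ∈ 𝒮 there is T ∈ 𝒯 with 0 ≤ S ≤ T). Then 𝒮 is collectively M-weakly compact. -/
open Filter Topology Metric Set

/-- The domination property for collectively M-weakly compact sets: if a set `𝒮` of
positive operators is dominated by a collectively M-weakly compact set `𝒯` of positive
operators, then `𝒮` is collectively M-weakly compact. -/
theorem collectivelyMwc_of_dominated {E F : Type*}
    [NormedAddCommGroup E] [Lattice E] [IsOrderedAddMonoid E] [HasSolidNorm E] [NormedSpace ℝ E] [CompleteSpace E]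
    [NormedAddCommGroup F] [Lattice F] [IsOrderedAddMonoid F] [HasSolidNorm F] [NormedSpace ℝ F] [CompleteSpace F]
    (𝒮 𝒯 : Set (E →L[ℝ] F))
    (hSpos : ∀ S ∈ 𝒮, ∀ x : E, 0 ≤ x → 0 ≤ S x)
    (hTpos : ∀ T ∈ 𝒯, ∀ x : E, 0 ≤ x → 0 ≤ T x)
    (hdom : ∀ S ∈ 𝒮, ∃ T ∈ 𝒯, ∀ x : E, 0 ≤ x → S x ≤ T x)
    (hbdd : ∃ M : ℝ, ∀ T ∈ 𝒯, ‖T‖ ≤ M)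
    (hT : ∀ x : ℕ → E, (∃ C : ℝ, ∀ n, ‖x n‖ ≤ C) → DisjSeq x →
      Tendsto (fun n => sSup ((fun T : E →L[ℝ] F => ‖T (x n)‖) '' 𝒯)) atTop (𝓝 0)) :
    (∃ M : ℝ, ∀ S ∈ 𝒮, ‖S‖ ≤ M) ∧
      ∀ x : ℕ → E, (∃ C : ℝ, ∀ n, ‖x n‖ ≤ C) → DisjSeq x →
        Tendsto (fun n => sSup ((fun S : E →L[ℝ] F => ‖S (x n)‖) '' 𝒮)) atTop (𝓝 0) := by
  -- key pointwise estimate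
  have key : ∀ S ∈ 𝒮, ∃ T ∈ 𝒯, ∀ x : E, ‖S x‖ ≤ ‖T (|x|)‖ := by
    intro S hS
    obtain ⟨T, hT𝒯, hle⟩ := hdom S hS
    refine ⟨T, hT𝒯, fun x => ?_⟩
    have habs : |S x| ≤ T (|x|) := by
      rw [abs_le']
      constructor
      · have h1 : 0 ≤ S (|x| - x) := hSpos S hS _ (sub_nonneg.mpr (le_abs_self x))
        have h2 : S (|x| - x) = S (|x|) - S x := by simp [map_sub]
        rw [h2, sub_nonneg] at h1
        exact h1.trans (hle (|x|) (abs_nonneg x))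
      · have h1 : 0 ≤ S (|x| + x) := hSpos S hS _ (by simpa [sub_neg_eq_add] using sub_nonneg.mpr (neg_le_abs x))
        have h2 : S (|x| + x) = S (|x|) + S x := by simp [map_add]
        rw [h2] at h1
        have h3 : -(S x) ≤ S (|x|) := sub_nonneg.mp (by rwa [sub_neg_eq_add])
        exact h3.trans (hle (|x|) (abs_nonneg x))
    have hTnn : (0 : F) ≤ T (|x|) := hTpos T hT𝒯 _ (abs_nonneg x)
    have h4 : |S x| ≤ |T (|x|)| := habs.trans_eq (abs_of_nonneg hTnn).symm
    exact HasSolidNorm.solid ((abs_abs (S x)).symm ▸ h4)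
  obtain ⟨M, hM⟩ := hbdd
  constructor
  · refine ⟨max M 0, fun S hS => ?_⟩
    obtain ⟨T, hT𝒯, hST⟩ := key S hS
    refine ContinuousLinearMap.opNorm_le_bound _ (le_max_right _ _) (fun x => ?_)
    calc ‖S x‖ ≤ ‖T (|x|)‖ := hST x
      _ ≤ ‖T‖ * ‖(|x| : E)‖ := T.le_opNorm _
      _ ≤ max M 0 * ‖x‖ := by
          rw [norm_abs_eq_norm]
          exact mul_le_mul_of_nonneg_right ((hM T hT𝒯).trans (le_max_left _ _)) (norm_nonneg x)
  · rintro x ⟨C, hC⟩ hdisj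
    have habsC : ∀ n, ‖(|x n| : E)‖ ≤ C := fun n => (norm_abs_eq_norm (x n)).le.trans (hC n)
    have habsdisj : DisjSeq (fun n => |x n|) := fun n m hnm => by
      simpa [abs_abs] using hdisj n m hnm
    have hg := hT (fun n => |x n|) ⟨C, habsC⟩ habsdisj
    refine squeeze_zero (fun n => Real.sSup_nonneg ?_) (fun n => ?_) hg
    · rintro r ⟨S, -, rfl⟩; exact norm_nonneg _
    · refine Real.sSup_le ?_ (Real.sSup_nonneg ?_)
      · rintro r ⟨S, hS, rfl⟩
        obtain ⟨T, hT𝒯, hST⟩ := key S hS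
        refine (hST (x n)).trans ?_
        have hbdd' : BddAbove ((fun T : E →L[ℝ] F => ‖T (|x n|)‖) '' 𝒯) := by
          refine ⟨M * C + |M| * |C| + 1, ?_⟩
          rintro r ⟨T', hT', rfl⟩
          have h1 : ‖T' (|x n|)‖ ≤ ‖T'‖ * ‖(|x n| : E)‖ := T'.le_opNorm _
          have h2 := mul_le_mul (hM T' hT') (habsC n) (norm_nonneg _)
            ((norm_nonneg T').trans (hM T' hT'))
          nlinarith [abs_nonneg M, abs_nonneg C, le_abs_self M, le_abs_self C,
            neg_abs_le M, neg_abs_le C]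
        exact le_csSup hbdd' ⟨T, hT𝒯, rfl⟩
      · rintro r ⟨T', -, rfl⟩; exact norm_nonneg _
end
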